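/- The nd-matrix M_mCi is not sufficiently expressive: there exist distinct truth-values x, y ∈ V_5 such that no unary Σ-formula ψ satisfies ψ^A(x) ⊆ D_5 and ψ^A(y) ⊆ V_5∖D_5, nor ψ^A(y) ⊆ D_5 and ψ^A(x) ⊆ V_5∖D_5. -/
import Mathlib


/-- Formulas over the signature Σ with unary ¬, ∘ and binary ∧, ∨, →,
freely generated from a denumerable set of propositional variables. -/
inductive Fm : Type where
  | var : ℕ → Fm
  | neg : Fm → Fm
  | circ : Fm → Fm
  | conj : Fm → Fm → Fm
  | disj : Fm → Fm → Fm
  | imp : Fm → Fm → Fm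
deriving DecidableEq

/-- Substitutions act homomorphically on formulas. -/
def subst (σ : ℕ → Fm) : Fm → Fm
  | .var n => σ n
  | .neg φ => .neg (subst σ φ)
  | .circ φ => .circ (subst σ φ)
  | .conj φ ψ => .conj (subst σ φ) (subst σ ψ)
  | .disj φ ψ => .disj (subst σ φ) (subst σ ψ)
  | .imp φ ψ => .imp (subst σ φ) (subst σ ψ)

/-- A Set-Fmla rule schema: a finite antecedent and a single succedent formula. -/
abbrev Rule : Type := Finset Fm × Fm

/-- Derivability in a Set-Fmla Hilbert system: `Derives H Γ φ` holds iff φ can be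
obtained from members of Γ by finitely many applications of substitution instances
of rules of `H`. -/
inductive Derives (H : Set Rule) : Set Fm → Fm → Prop where
  | prem : ∀ {Γ : Set Fm} {φ : Fm}, φ ∈ Γ → Derives H Γ φ
  | rule : ∀ {Γ : Set Fm} (r : Rule) (σ : ℕ → Fm), r ∈ H →
      (∀ ψ ∈ r.1, Derives H Γ (subst σ ψ)) → Derives H Γ (subst σ r.2)

/-- The five truth-values of the nd-matrix M_mCi. -/
inductive V5 : Type where
  | f | F | I | T | t
deriving DecidableEq

/-- The designated values D₅ = {I, T, t}. -/
def D5 : Set V5 := {x | x = V5.I ∨ x = V5.T ∨ x = V5.t}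

instance (x : V5) : Decidable (x ∈ D5) :=
  inferInstanceAs (Decidable (x = V5.I ∨ x = V5.T ∨ x = V5.t))

/-- Non-deterministic conjunction of M_mCi. -/
def nAnd (x y : V5) : Set V5 :=
  if x ∈ D5 ∧ y ∈ D5 then {V5.I, V5.t} else {V5.f}
/-- Non-deterministic disjunction of M_mCi. -/
def nOr (x y : V5) : Set V5 :=
  if x ∈ D5 ∨ y ∈ D5 then {V5.I, V5.t} else {V5.f}
/-- Non-deterministic implication of M_mCi. -/
def nImp (x y : V5) : Set V5 :=
  if x ∉ D5 ∨ y ∈ D5 then {V5.I, V5.t} else {V5.f}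
/-- Non-deterministic negation of M_mCi. -/
def nNeg : V5 → Set V5
  | V5.f => {V5.I, V5.t}
  | V5.F => {V5.T}
  | V5.I => {V5.I, V5.t}
  | V5.T => {V5.F}
  | V5.t => {V5.f}
/-- Non-deterministic consistency operator of M_mCi. -/
def nCirc : V5 → Set V5
  | V5.I => {V5.F}
  | _ => {V5.T}

/-- Valuations on the nd-matrix M_mCi. -/
def IsVal5 (v : Fm → V5) : Prop :=
  (∀ φ ψ : Fm, v (.conj φ ψ) ∈ nAnd (v φ) (v ψ)) ∧
  (∀ φ ψ : Fm, v (.disj φ ψ) ∈ nOr (v φ) (v ψ)) ∧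
  (∀ φ ψ : Fm, v (.imp φ ψ) ∈ nImp (v φ) (v ψ)) ∧
  (∀ φ : Fm, v (.neg φ) ∈ nNeg (v φ)) ∧
  (∀ φ : Fm, v (.circ φ) ∈ nCirc (v φ))

/-- The Set-Set entailment relation ⊩ determined by M_mCi. -/
def Ent5 (Γ Δ : Set Fm) : Prop :=
  ∀ v : Fm → V5, IsVal5 v → (∀ φ ∈ Γ, v φ ∈ D5) → ∃ δ ∈ Δ, v δ ∈ D5

/-- The set of propositional variables occurring in a formula. -/
def fvars : Fm → Set ℕ
  | .var n => {n}
  | .neg φ => fvars φ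
  | .circ φ => fvars φ
  | .conj φ ψ => fvars φ ∪ fvars ψ
  | .disj φ ψ => fvars φ ∪ fvars ψ
  | .imp φ ψ => fvars φ ∪ fvars ψ

/-- Unary formulas: formulas over the single variable `var 0`. -/
def UnaryFm (ψ : Fm) : Prop := fvars ψ ⊆ {0}

/-- ψ^A(x): the set of values taken by the unary formula ψ over valuations
assigning `x` to the variable `var 0`. -/
def fmlImage (ψ : Fm) (x : V5) : Set V5 :=
  {w | ∃ v : Fm → V5, IsVal5 v ∧ v (.var 0) = x ∧ v ψ = w}

/-- ψ separates (x,y) with respect to the distinguished set `D`: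
ψ^A(x) ⊆ D and ψ^A(y) ⊆ V∖D, or vice versa. -/
def SepBy (D : Set V5) (ψ : Fm) (x y : V5) : Prop :=
  (fmlImage ψ x ⊆ D ∧ fmlImage ψ y ⊆ Dᶜ) ∨
  (fmlImage ψ y ⊆ D ∧ fmlImage ψ x ⊆ Dᶜ)

/-- The simulation relation: identity together with (T,t) and (F,f). -/
def Rel5 (x y : V5) : Prop :=
  x = y ∨ (x = V5.T ∧ y = V5.t) ∨ (x = V5.F ∧ y = V5.f)

lemma relD5 {x y : V5} (h : Rel5 x y) : x ∈ D5 ↔ y ∈ D5 := by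
  rcases h with rfl | ⟨rfl, rfl⟩ | ⟨rfl, rfl⟩ <;> simp [D5]

/-- Canonical choice for negation in a simulating valuation. -/
def negStep : V5 → V5 → V5
  | .f, a => if a = .T then .t else a
  | .F, _ => .T
  | .I, a => a
  | .T, _ => .F
  | .t, _ => .f

lemma negKey {x y a : V5} (hr : Rel5 x y) (hm : a ∈ nNeg x) :
    Rel5 a (negStep y a) ∧ negStep y a ∈ nNeg y := by
  cases x <;> cases y <;> cases a <;>
    simp_all [Rel5, nNeg, negStep]

lemma circKey {x y a : V5} (hr : Rel5 x y) (hm : a ∈ nCirc x) :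
    Rel5 a (if y = V5.I then V5.F else V5.T) ∧
      (if y = V5.I then V5.F else V5.T) ∈ nCirc y := by
  cases x <;> cases y <;> cases a <;>
    simp_all [Rel5, nCirc]

lemma andEq {x y x' y' : V5} (hx : Rel5 x x') (hy : Rel5 y y') :
    nAnd x y = nAnd x' y' := by
  unfold nAnd
  exact if_congr (by rw [relD5 hx, relD5 hy]) rfl rfl

lemma orEq {x y x' y' : V5} (hx : Rel5 x x') (hy : Rel5 y y') :
    nOr x y = nOr x' y' := by
  unfold nOr
  exact if_congr (by rw [relD5 hx, relD5 hy]) rfl rfl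

lemma impEq {x y x' y' : V5} (hx : Rel5 x x') (hy : Rel5 y y') :
    nImp x y = nImp x' y' := by
  unfold nImp
  exact if_congr (by rw [relD5 hx, relD5 hy]) rfl rfl

/-- Value map used at variables: T ↦ t, F ↦ f, identity otherwise. -/
def gmap : V5 → V5
  | .T => .t
  | .F => .f
  | x => x

lemma gmapRel (x : V5) : Rel5 x (gmap x) := by
  cases x <;> simp [Rel5, gmap]

/-- The simulating valuation: given a valuation `v`, produce a valuation
agreeing with `v` on designation everywhere, but with variables remapped by
`gmap` (in particular sending T to t). -/
def sim (v : Fm → V5) : Fm → V5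
  | .var n => gmap (v (.var n))
  | .neg φ => negStep (sim v φ) (v (.neg φ))
  | .circ φ => if sim v φ = V5.I then V5.F else V5.T
  | .conj φ χ => v (.conj φ χ)
  | .disj φ χ => v (.disj φ χ)
  | .imp φ χ => v (.imp φ χ)

lemma simRel {v : Fm → V5} (hv : IsVal5 v) : ∀ φ : Fm, Rel5 (v φ) (sim v φ) := by
  obtain ⟨hand, hor, himp, hneg, hcirc⟩ := hv
  intro φ
  induction φ with
  | var n => exact gmapRel _
  | neg φ ih => exact (negKey ih (hneg φ)).1
  | circ φ ih => exact (circKey ih (hcirc φ)).1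
  | conj φ χ ih1 ih2 => exact Or.inl rfl
  | disj φ χ ih1 ih2 => exact Or.inl rfl
  | imp φ χ ih1 ih2 => exact Or.inl rfl

lemma simVal {v : Fm → V5} (hv : IsVal5 v) : IsVal5 (sim v) := by
  have h := simRel hv
  obtain ⟨hand, hor, himp, hneg, hcirc⟩ := hv
  refine ⟨?_, ?_, ?_, ?_, ?_⟩
  · intro φ χ
    show v (.conj φ χ) ∈ nAnd (sim v φ) (sim v χ)
    rw [← andEq (h φ) (h χ)]; exact hand φ χ
  · intro φ χ
    show v (.disj φ χ) ∈ nOr (sim v φ) (sim v χ)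
    rw [← orEq (h φ) (h χ)]; exact hor φ χ
  · intro φ χ
    show v (.imp φ χ) ∈ nImp (sim v φ) (sim v χ)
    rw [← impEq (h φ) (h χ)]; exact himp φ χ
  · intro φ
    exact (negKey (h φ) (hneg φ)).2
  · intro φ
    exact (circKey (h φ) (hcirc φ)).2

/-- Canonical negation choice for the base valuation. -/
def nb : V5 → V5
  | .f => .t
  | .F => .T
  | .I => .t
  | .T => .F
  | .t => .f

/-- A base valuation assigning T to every variable. -/
def v0 : Fm → V5
  | .var _ => .T
  | .neg φ => nb (v0 φ)
  | .circ φ => if v0 φ = V5.I then V5.F else V5.T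
  | .conj φ χ => if v0 φ ∈ D5 ∧ v0 χ ∈ D5 then V5.t else V5.f
  | .disj φ χ => if v0 φ ∈ D5 ∨ v0 χ ∈ D5 then V5.t else V5.f
  | .imp φ χ => if v0 φ ∉ D5 ∨ v0 χ ∈ D5 then V5.t else V5.f

lemma v0Val : IsVal5 v0 := by
  refine ⟨?_, ?_, ?_, ?_, ?_⟩
  · intro φ χ
    show (if v0 φ ∈ D5 ∧ v0 χ ∈ D5 then V5.t else V5.f) ∈ nAnd (v0 φ) (v0 χ)
    unfold nAnd; split <;> simp_all
  · intro φ χ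
    show (if v0 φ ∈ D5 ∨ v0 χ ∈ D5 then V5.t else V5.f) ∈ nOr (v0 φ) (v0 χ)
    unfold nOr; split <;> simp_all
  · intro φ χ
    show (if v0 φ ∉ D5 ∨ v0 χ ∈ D5 then V5.t else V5.f) ∈ nImp (v0 φ) (v0 χ)
    unfold nImp; split <;> simp_all
  · intro φ
    show nb (v0 φ) ∈ nNeg (v0 φ)
    cases h : v0 φ <;> simp [nb, nNeg]
  · intro φ
    show (if v0 φ = V5.I then V5.F else V5.T) ∈ nCirc (v0 φ)
    cases h : v0 φ <;> simp [nCirc]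

/-- the nd-matrix M_mCi is not sufficiently expressive: some pair
of distinct truth-values admits no unary separator with respect to D₅. -/
theorem stmt17 :
    ∃ x y : V5, x ≠ y ∧ ∀ ψ : Fm, UnaryFm ψ →
      ¬ (fmlImage ψ x ⊆ D5 ∧ fmlImage ψ y ⊆ D5ᶜ) ∧
      ¬ (fmlImage ψ y ⊆ D5 ∧ fmlImage ψ x ⊆ D5ᶜ) := by
  refine ⟨V5.T, V5.t, by simp, ?_⟩
  intro ψ _
  -- the two witnessing valuations, agreeing on designation at ψ
  have hv0 : IsVal5 v0 := v0Val
  have hsv : IsVal5 (sim v0) := simVal hv0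
  have hx : v0 ψ ∈ fmlImage ψ V5.T := ⟨v0, hv0, rfl, rfl⟩
  have hy : sim v0 ψ ∈ fmlImage ψ V5.t := ⟨sim v0, hsv, rfl, rfl⟩
  have hd : v0 ψ ∈ D5 ↔ sim v0 ψ ∈ D5 := relD5 (simRel hv0 ψ)
  constructor
  · rintro ⟨h1, h2⟩
    exact h2 hy (hd.mp (h1 hx))
  · rintro ⟨h1, h2⟩
    exact h2 hx (hd.mpr (h1 hy))
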